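/- Fix δ ∈ (0,1] and an integer d ≥ 1, and write ⟨ω⟩ := (1 + |ω|²)^{1/2} for ω ∈ ℝ^d. There exist a constant C > 0, an integer M ≥ 0, and constants C_j ≥ 0 for each j ∈ ℕ, such that for every h ∈ (0,1] there are a countable set Ω ⊆ ℝ^d and smooth functions φ_ω : ℝ^d → [0,1] indexed by ω ∈ Ω with the following properties, where U_ω := {ξ ∈ ℝ^d : |ξ − ω| ≤ ½ h^δ ⟨ω⟩}: (i) the balls U_ω, ω ∈ Ω, cover ℝ^d; (ii) #{ω ∈ Ω : |ω| ≤ X} ≤ C h^{−M} X^M for every X ≥ 1; (iii) for every ω₁ ∈ Ω, #{ω₂ ∈ Ω : U_{ω₁} ∩ U_{ω₂} ≠ ∅} ≤ C; (iv) each φ_ω is supported in {ξ : |ξ| ≤ ½}, satisfies ‖D^j φ_ω(ξ)‖ ≤ C_j for all ξ ∈ ℝ^d and all j ∈ ℕ, and Σ_{ω ∈ Ω} φ_ω((ξ − ω)/(h^δ ⟨ω⟩)) = 1 for every ξ ∈ ℝ^d. -/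

import Mathlib

/-!
Take a maximal set `Ω` of centres any two of which, `x ≠ y`, are at distance at least
`h^δ max(⟨x⟩, ⟨y⟩) / 8` (Zorn). Maximality makes the balls of radius `h^δ ⟨ω⟩ / 4` cover the
space, and since `⟨·⟩` is `1`-Lipschitz the centres of two overlapping balls `U_ω` have brackets
within a factor `3` of each other; a volume-packing argument then bounds both the number of
centres of norm at most `X` and the number of balls `U_ω` meeting a given one.

Fix a bump `ψ` equal to `1` on the ball of radius `1/4` and supported in the ball of radius
`1/3`, put `ψ_ω(ξ) = ψ((ξ - ω) / (h^δ ⟨ω⟩))` and `S = ∑ ψ_ω ≥ 1`, and let `φ_ω(η)` be `ψ_ω / S`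
at `ξ = ω + h^δ ⟨ω⟩ η`. Near the support of `ψ`, `S` only involves the balls meeting `U_ω`, and
in the variable `η` each of its terms is `ψ` composed with an affine map of slope
`⟨ω⟩ / ⟨ω'⟩ ≤ 3`. Writing `1 / S` as a fixed smooth function of this local sum, which takes
values in `[0, 98^d]`, bounds every derivative of `φ_ω` independently of `h` and `ω`.
-/

/-- The ball `U_ω` of radius `½ h^δ ⟨ω⟩` about `ω`, where `⟨ω⟩ = (1 + |ω|²)^{1/2}`. -/
noncomputable def Uball (d : ℕ) (hh δ : ℝ) (ω : EuclideanSpace ℝ (Fin d)) :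
    Set (EuclideanSpace ℝ (Fin d)) :=
  Metric.closedBall ω (2⁻¹ * hh ^ δ * Real.sqrt (1 + ‖ω‖ ^ 2))

open Metric Set MeasureTheory
open scoped ENNReal

namespace BracketPartition

section Bracket

variable {E : Type*} [NormedAddCommGroup E]

noncomputable def japaneseBracket (x : E) : ℝ := √(1 + ‖x‖ ^ 2)

lemma one_le_japaneseBracket (x : E) : 1 ≤ japaneseBracket x :=
  Real.one_le_sqrt.2 (by nlinarith [sq_nonneg ‖x‖])

lemma japaneseBracket_pos (x : E) : 0 < japaneseBracket x :=
  one_pos.trans_le (one_le_japaneseBracket x)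

lemma japaneseBracket_le_add_dist (x y : E) :
    japaneseBracket x ≤ japaneseBracket y + dist x y := by
  have hx : ‖x‖ ≤ ‖y‖ + dist x y := by
    rw [dist_eq_norm]; linarith [norm_sub_norm_le x y]
  have hy : ‖y‖ ≤ japaneseBracket y := Real.le_sqrt_of_sq_le (by linarith)
  have hy2 : japaneseBracket y ^ 2 = 1 + ‖y‖ ^ 2 := Real.sq_sqrt (by positivity)
  rw [japaneseBracket, Real.sqrt_le_iff]
  have hxy := dist_nonneg (x := x) (y := y)
  exact ⟨by linarith [japaneseBracket_pos y], by nlinarith [norm_nonneg x]⟩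

end Bracket

lemma exists_maximal_pairwise {α : Type*} (r : α → α → Prop) [Std.Symm r] :
    ∃ s : Set α, s.Pairwise r ∧ ∀ x ∉ s, ∃ y ∈ s, x ≠ y ∧ ¬ r x y := by
  obtain ⟨s, hs⟩ := zorn_subset {s : Set α | s.Pairwise r} fun c hc hchain =>
    ⟨⋃₀ c, (pairwise_sUnion hchain.directedOn).2 hc, fun _ => subset_sUnion_of_mem⟩
  refine ⟨s, hs.prop, fun x hx => ?_⟩
  by_contra! h
  exact hx (hs.2 ((pairwise_insert_of_symm).2 ⟨hs.prop, h⟩) (subset_insert x s) (mem_insert x s))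

section Packing

variable {E : Type*} [NormedAddCommGroup E] [NormedSpace ℝ E] [FiniteDimensional ℝ E]

/-- Volume counting: disjoint balls of radius `r / 2` fit into a ball of radius `R + r`. -/
lemma card_le_of_pairwise_le_dist {r R : ℝ} (hr : 0 < r) (hR : 0 ≤ R) {c : E} {T : Finset E}
    (hT : ∀ x ∈ T, dist x c ≤ R) (hsep : (T : Set E).Pairwise fun x y => r ≤ dist x y) :
    (T.card : ℝ) ≤ (2 * (R + r) / r) ^ Module.finrank ℝ E := by
  let : MeasurableSpace E := borel E
  have : BorelSpace E := ⟨rfl⟩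
  set μ : Measure E := Measure.addHaar
  set d := Module.finrank ℝ E
  have hdisj : (T : Set E).PairwiseDisjoint fun x => ball x (r / 2) := fun x hx y hy hxy =>
    ball_disjoint_ball (by linarith [hsep hx hy hxy])
  have hsub : (⋃ x ∈ T, ball x (r / 2)) ⊆ ball c (R + r) := by
    simp only [iUnion_subset_iff]
    intro x hx y hy
    rw [mem_ball] at hy ⊢
    linarith [dist_triangle y x c, hT x hx]
  have hvol : (T.card : ℝ≥0∞) * ENNReal.ofReal ((r / 2) ^ d) ≤ ENNReal.ofReal ((R + r) ^ d) := by
    have h := (measure_biUnion_finset (μ := μ) hdisj fun _ _ => measurableSet_ball).symm.trans_le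
      (measure_mono hsub)
    simp only [Measure.addHaar_ball_of_pos μ _ (half_pos hr),
      Measure.addHaar_ball_of_pos μ _ (by linarith : 0 < R + r), Finset.sum_const,
      nsmul_eq_mul, ← mul_assoc] at h
    exact (ENNReal.mul_le_mul_iff_left (measure_ball_pos μ _ one_pos).ne'
      measure_ball_lt_top.ne).1 h
  rw [← ENNReal.ofReal_natCast, ← ENNReal.ofReal_mul (by positivity),
    ENNReal.ofReal_le_ofReal_iff (by positivity)] at hvol
  rw [show 2 * (R + r) / r = (R + r) / (r / 2) by field_simp, div_pow,
    le_div_iff₀ (by positivity)]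
  exact hvol

lemma finite_and_ncard_le_of_pairwise_le_dist {r R : ℝ} (hr : 0 < r) (hR : 0 ≤ R) {c : E}
    {S : Set E} (hS : ∀ x ∈ S, dist x c ≤ R) (hsep : S.Pairwise fun x y => r ≤ dist x y) :
    S.Finite ∧ (S.ncard : ℝ) ≤ (2 * (R + r) / r) ^ Module.finrank ℝ E := by
  have hcard : ∀ T : Finset E, ↑T ⊆ S → (T.card : ℝ) ≤ (2 * (R + r) / r) ^ Module.finrank ℝ E :=
    fun T hTS => card_le_of_pairwise_le_dist hr hR (fun x hx => hS x (hTS hx)) (hsep.mono hTS)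
  have hfin : S.Finite := by
    by_contra hinf
    obtain ⟨T, hTS, hTfin, hTcard⟩ := Set.Infinite.exists_subset_ncard_eq hinf
      (⌊(2 * (R + r) / r) ^ Module.finrank ℝ E⌋₊ + 1)
    have h := hcard hTfin.toFinset (by simpa using hTS)
    rw [← ncard_eq_toFinset_card T hTfin, hTcard] at h
    push_cast at h
    linarith [Nat.lt_floor_add_one ((2 * (R + r) / r) ^ Module.finrank ℝ E)]
  refine ⟨hfin, ?_⟩
  simpa [ncard_eq_toFinset_card S hfin] using hcard hfin.toFinset (by simp)

end Packing

section Net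

variable {E : Type*} [NormedAddCommGroup E]

-- The ball `U_ω` of the statement, with `t = h^δ`.
def patch (t : ℝ) (ω : E) : Set E := closedBall ω (2⁻¹ * t * japaneseBracket ω)

def neighbors (t : ℝ) (Ω : Set E) (ω : E) : Set E :=
  {ω' ∈ Ω | (patch t ω ∩ patch t ω').Nonempty}

lemma japaneseBracket_le_and_dist_le_of_patch_inter {t : ℝ} (ht0 : 0 ≤ t) (ht1 : t ≤ 1)
    {ω₁ ω₂ : E}
    (h : (patch t ω₁ ∩ patch t ω₂).Nonempty) :
    japaneseBracket ω₂ ≤ 3 * japaneseBracket ω₁ ∧ dist ω₂ ω₁ ≤ 2 * t * japaneseBracket ω₁ := by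
  obtain ⟨ξ, hξ₁, hξ₂⟩ := h
  rw [patch, mem_closedBall] at hξ₁ hξ₂
  have hd : dist ω₂ ω₁ ≤ 2⁻¹ * t * japaneseBracket ω₁ + 2⁻¹ * t * japaneseBracket ω₂ := by
    linarith [dist_triangle_left ω₂ ω₁ ξ]
  have hb := japaneseBracket_le_add_dist ω₂ ω₁
  have h3 : japaneseBracket ω₂ ≤ 3 * japaneseBracket ω₁ := by
    nlinarith [japaneseBracket_pos ω₁, japaneseBracket_pos ω₂]
  exact ⟨h3, by nlinarith⟩

structure IsNet (t : ℝ) (Ω : Set E) : Prop where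
  pairwise_le_dist :
    Ω.Pairwise fun x y => t / 8 * max (japaneseBracket x) (japaneseBracket y) ≤ dist x y
  exists_dist_le : ∀ ξ, ∃ ω ∈ Ω, dist ξ ω ≤ 4⁻¹ * t * japaneseBracket ω

/-- A maximal separated set is a net: a point that cannot be added is close to some centre. -/
lemma exists_isNet {t : ℝ} (ht0 : 0 ≤ t) (ht1 : t ≤ 1) : ∃ Ω : Set E, IsNet t Ω := by
  let r : E → E → Prop :=
    fun x y => t / 8 * max (japaneseBracket x) (japaneseBracket y) ≤ dist x y
  have : Std.Symm r := ⟨fun x y hxy => by simpa only [r, max_comm, dist_comm] using hxy⟩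
  obtain ⟨Ω, hsep, hmax⟩ := exists_maximal_pairwise r
  refine ⟨Ω, hsep, fun ξ => ?_⟩
  by_cases hξ : ξ ∈ Ω
  · have := japaneseBracket_pos ξ
    exact ⟨ξ, hξ, by rw [dist_self]; positivity⟩
  obtain ⟨ω, hω, -, hlt⟩ := hmax ξ hξ
  refine ⟨ω, hω, ?_⟩
  have hlt : dist ξ ω < t / 8 * max (japaneseBracket ξ) (japaneseBracket ω) := not_le.1 hlt
  have hb := japaneseBracket_le_add_dist ξ ω
  have hpos := japaneseBracket_pos ω
  rcases max_choice (japaneseBracket ξ) (japaneseBracket ω) with hm | hm <;> rw [hm] at hlt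
  · nlinarith [mul_le_mul_of_nonneg_left hb ht0,
      mul_nonneg (sub_nonneg.2 ht1) (dist_nonneg (x := ξ) (y := ω))]
  · nlinarith

variable {t : ℝ} {Ω : Set E}

lemma IsNet.pairwise_le_dist_neighbors (hΩ : IsNet t Ω) (ht0 : 0 ≤ t) (ht1 : t ≤ 1) (ω : E) :
    (neighbors t Ω ω).Pairwise fun x y => t * japaneseBracket ω / 24 ≤ dist x y := by
  intro x hx y hy hxy
  have hsep := hΩ.pairwise_le_dist hx.1 hy.1 hxy
  have hx3 := (japaneseBracket_le_and_dist_le_of_patch_inter ht0 ht1 (inter_comm _ _ ▸ hx.2)).1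
  nlinarith [le_max_left (japaneseBracket x) (japaneseBracket y)]

variable [NormedSpace ℝ E] [FiniteDimensional ℝ E]

lemma IsNet.finite_and_ncard_neighbors_le (hΩ : IsNet t Ω) (ht0 : 0 < t) (ht1 : t ≤ 1) (ω : E) :
    (neighbors t Ω ω).Finite ∧
      ((neighbors t Ω ω).ncard : ℝ) ≤ 98 ^ Module.finrank ℝ E := by
  have hpos := japaneseBracket_pos ω
  have h := finite_and_ncard_le_of_pairwise_le_dist (by positivity) (by positivity)
    (fun x hx => (japaneseBracket_le_and_dist_le_of_patch_inter ht0.le ht1 hx.2).2)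
    (hΩ.pairwise_le_dist_neighbors ht0.le ht1 ω)
  -- neighbours lie within `2 t ⟨ω⟩` of `ω` and are `t ⟨ω⟩ / 24` apart: `98 = 2 (2 + 1/24) · 24`
  refine ⟨h.1, h.2.trans_eq ?_⟩
  congr 1
  field_simp
  ring

lemma IsNet.finite_and_ncard_norm_le (hΩ : IsNet t Ω) (ht0 : 0 < t) (ht1 : t ≤ 1) {X : ℝ}
    (hX : 1 ≤ X) :
    {ω ∈ Ω | ‖ω‖ ≤ X}.Finite ∧
      ({ω ∈ Ω | ‖ω‖ ≤ X}.ncard : ℝ) ≤ (18 * X / t) ^ Module.finrank ℝ E := by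
  have h := finite_and_ncard_le_of_pairwise_le_dist (c := (0 : E)) (S := {ω ∈ Ω | ‖ω‖ ≤ X})
    (by positivity : 0 < t / 8) (by linarith : 0 ≤ X) (fun x hx => by simpa using hx.2)
    fun x hx y hy hxy => by
      nlinarith [hΩ.pairwise_le_dist hx.1 hy.1 hxy, one_le_japaneseBracket x,
        le_max_left (japaneseBracket x) (japaneseBracket y)]
  refine ⟨h.1, h.2.trans (pow_le_pow_left₀ (by positivity) ?_ _)⟩
  rw [div_le_div_iff₀ (by positivity) ht0]
  nlinarith

lemma IsNet.countable (hΩ : IsNet t Ω) (ht0 : 0 < t) (ht1 : t ≤ 1) : Ω.Countable := by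
  have hΩ_eq : Ω = ⋃ n : ℕ, {ω ∈ Ω | ‖ω‖ ≤ n + 1} := by
    ext ω
    simp only [mem_iUnion]
    exact ⟨fun h => ⟨⌈‖ω‖⌉₊, h, by linarith [Nat.le_ceil ‖ω‖]⟩, fun ⟨_, h, _⟩ => h⟩
  rw [hΩ_eq]
  exact countable_iUnion fun n =>
    (hΩ.finite_and_ncard_norm_le ht0 ht1 (by linarith [n.cast_nonneg (α := ℝ)])).1.countable

end Net

section UniformBounds

variable {ι E F G : Type*} [NormedAddCommGroup E] [NormedSpace ℝ E]
  [NormedAddCommGroup F] [NormedSpace ℝ F] [NormedAddCommGroup G] [NormedSpace ℝ G]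

lemma exists_nonneg_forall_le_of_forall_exists {P : ℕ → ℝ → Prop}
    (hP : ∀ m {C C'}, C ≤ C' → P m C → P m C') (h : ∀ m, ∃ C, P m C) (n : ℕ) :
    ∃ C, 0 ≤ C ∧ ∀ m ≤ n, P m C := by
  choose C hC using h
  obtain ⟨M, hM⟩ := Finset.exists_le (insert 0 ((Finset.range (n + 1)).image C))
  exact ⟨M, hM 0 (Finset.mem_insert_self _ _), fun m hm => hP m (hM _ (Finset.mem_insert_of_mem
    (Finset.mem_image_of_mem _ (Finset.mem_range.2 (by omega))))) (hC m)⟩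

lemma norm_iteratedFDeriv_comp_add_smul {f : E → F} (hf : ContDiff ℝ (⊤ : ℕ∞) f) (n : ℕ)
    (b : E) (a : ℝ) (x : E) :
    ‖iteratedFDeriv ℝ n (fun y => f (b + a • y)) x‖ =
      |a| ^ n * ‖iteratedFDeriv ℝ n f (b + a • x)‖ := by
  have hshift : ContDiff ℝ n fun z => f (b + z) :=
    (hf.comp (contDiff_const.add contDiff_id)).of_le (by exact_mod_cast le_top)
  simp only [iteratedFDeriv_comp_const_smul a hshift, iteratedFDeriv_comp_add_left, norm_smul,
    norm_pow, Real.norm_eq_abs]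

def HasUniformDerivBounds (f : ι → E → F) : Prop :=
  ∀ n : ℕ, ∃ C, ∀ i x, ‖iteratedFDeriv ℝ n (f i) x‖ ≤ C

lemma HasUniformDerivBounds.exists_forall_le {f : ι → E → F} (hf : HasUniformDerivBounds f)
    (n : ℕ) : ∃ C, 0 ≤ C ∧ ∀ m ≤ n, ∀ i x, ‖iteratedFDeriv ℝ m (f i) x‖ ≤ C :=
  exists_nonneg_forall_le_of_forall_exists (fun _ _ _ hCC' h i x => (h i x).trans hCC') hf n

lemma HasUniformDerivBounds.mul {f g : ι → E → ℝ} (hf : HasUniformDerivBounds f)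
    (hg : HasUniformDerivBounds g) (hf' : ∀ i, ContDiff ℝ (⊤ : ℕ∞) (f i))
    (hg' : ∀ i, ContDiff ℝ (⊤ : ℕ∞) (g i)) :
    HasUniformDerivBounds fun i x => f i x * g i x := by
  intro n
  obtain ⟨Cf, hCf0, hCf⟩ := hf.exists_forall_le n
  obtain ⟨Cg, -, hCg⟩ := hg.exists_forall_le n
  refine ⟨∑ m ∈ Finset.range (n + 1), (n.choose m : ℝ) * Cf * Cg, fun i x => ?_⟩
  refine (norm_iteratedFDeriv_mul_le (hf' i) (hg' i) x (by exact_mod_cast le_top)).trans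
    (Finset.sum_le_sum fun m hm => ?_)
  have hm : m ≤ n := Nat.lt_succ_iff.1 (Finset.mem_range.1 hm)
  gcongr
  · exact hCf m hm i x
  · exact hCg (n - m) (Nat.sub_le n m) i x

lemma HasUniformDerivBounds.comp {g : F → G} {f : ι → E → F} (hf : HasUniformDerivBounds f)
    (hg : ContDiff ℝ (⊤ : ℕ∞) g) (hf' : ∀ i, ContDiff ℝ (⊤ : ℕ∞) (f i)) {s : Set F}
    (hs : IsCompact s) (hfs : ∀ i x, f i x ∈ s) :
    HasUniformDerivBounds fun i => g ∘ f i := by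
  intro n
  obtain ⟨Cg, -, hCg⟩ := exists_nonneg_forall_le_of_forall_exists
    (P := fun m C => ∀ y ∈ s, ‖iteratedFDeriv ℝ m g y‖ ≤ C)
    (fun _ _ _ hCC' h y hy => (h y hy).trans hCC')
    (fun m => hs.exists_bound_of_continuousOn
      (hg.continuous_iteratedFDeriv (by exact_mod_cast le_top)).continuousOn) n
  obtain ⟨Cf, hCf0, hCf⟩ := hf.exists_forall_le n
  refine ⟨n.factorial * Cg * (Cf + 1) ^ n, fun i x => norm_iteratedFDeriv_comp_le hg (hf' i)
    (by exact_mod_cast le_top) x (fun m hm => hCg m hm _ (hfs i x)) fun m hm1 hmn => ?_⟩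
  calc ‖iteratedFDeriv ℝ m (f i) x‖ ≤ Cf + 1 := by linarith [hCf m hmn i x]
    _ ≤ (Cf + 1) ^ m := le_self_pow₀ (by linarith) (by omega)

end UniformBounds

section Bump

variable {E : Type*} [NormedAddCommGroup E] [NormedSpace ℝ E] [FiniteDimensional ℝ E]

noncomputable def bump : E → ℝ := ⇑(⟨4⁻¹, 3⁻¹, by norm_num, by norm_num⟩ : ContDiffBump (0 : E))

lemma contDiff_bump : ContDiff ℝ (⊤ : ℕ∞) (bump : E → ℝ) := ContDiffBump.contDiff _

lemma bump_nonneg (x : E) : 0 ≤ bump x := ContDiffBump.nonneg _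

lemma bump_le_one (x : E) : bump x ≤ 1 := ContDiffBump.le_one _

lemma bump_eq_one {x : E} (hx : ‖x‖ ≤ 4⁻¹) : bump x = 1 :=
  ContDiffBump.one_of_mem_closedBall _ (mem_closedBall_zero_iff.2 hx)

lemma bump_eq_zero {x : E} (hx : 3⁻¹ ≤ ‖x‖) : bump x = 0 :=
  ContDiffBump.zero_of_le_dist _ (by rwa [dist_zero_right])

lemma norm_lt_of_bump_ne_zero {x : E} (hx : bump x ≠ 0) : ‖x‖ < 3⁻¹ :=
  not_le.1 fun h => hx (bump_eq_zero h)

lemma hasCompactSupport_bump : HasCompactSupport (bump : E → ℝ) :=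
  ContDiffBump.hasCompactSupport _

lemma hasUniformDerivBounds_bump {ι : Type*} :
    HasUniformDerivBounds fun _ : ι => (bump : E → ℝ) := by
  intro n
  have hcont : Continuous (iteratedFDeriv ℝ n (bump : E → ℝ)) :=
    contDiff_bump.continuous_iteratedFDeriv (by exact_mod_cast le_top)
  have hsupp : HasCompactSupport (iteratedFDeriv ℝ n (bump : E → ℝ)) :=
    hasCompactSupport_bump.iteratedFDeriv n
  obtain ⟨C, hC⟩ := hcont.bounded_above_of_compact_support hsupp
  exact ⟨C, fun _ => hC⟩

noncomputable def localBump (t : ℝ) (ω ξ : E) : ℝ := bump ((t * japaneseBracket ω)⁻¹ • (ξ - ω))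

end Bump

noncomputable def cutoffInv (y : ℝ) : ℝ := Real.smoothTransition (2 * y - 1) / y

lemma cutoffInv_of_one_le {y : ℝ} (hy : 1 ≤ y) : cutoffInv y = y⁻¹ := by
  rw [cutoffInv, Real.smoothTransition.one_of_one_le (by linarith), one_div]

lemma contDiff_cutoffInv : ContDiff ℝ (⊤ : ℕ∞) cutoffInv := by
  refine contDiff_iff_contDiffAt.2 fun y => ?_
  rcases lt_or_ge y 2⁻¹ with hy | hy
  · refine contDiffAt_const.congr_of_eventuallyEq (f := 0) ?_
    filter_upwards [Iio_mem_nhds hy] with z hz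
    rw [cutoffInv, Real.smoothTransition.zero_of_nonpos (by linarith [mem_Iio.1 hz]), zero_div]
    rfl
  · exact (Real.smoothTransition.contDiff.comp ((contDiff_const.mul contDiff_id).sub
      contDiff_const)).contDiffAt.div contDiffAt_id (by positivity)

lemma abs_inv_mul_mul_le_of_le_mul {t a b c : ℝ} (ha : 0 < a) (hb : 0 ≤ b) (hab : b ≤ c * a) :
    |(t * a)⁻¹ * (t * b)| ≤ c := by
  rcases eq_or_ne t 0 with rfl | ht
  · simpa using nonneg_of_mul_nonneg_left (hb.trans hab) ha
  rw [show (t * a)⁻¹ * (t * b) = b / a by field_simp, abs_of_nonneg (by positivity),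
    div_le_iff₀ ha]
  exact hab

section Chart

variable {E : Type*} [NormedAddCommGroup E] [NormedSpace ℝ E] [FiniteDimensional ℝ E] {K : ℝ}

lemma localBump_add_smul (t : ℝ) (ω c : E) (s : ℝ) (η : E) :
    localBump t ω (c + s • η) =
      bump ((t * japaneseBracket ω)⁻¹ • (c - ω) + ((t * japaneseBracket ω)⁻¹ * s) • η) := by
  rw [localBump, mul_smul, ← smul_add]
  congr 2
  abel

/-- The data of the weight `φ_center` in the variable `η`, where `ξ = center + scale ⟨center⟩ η`:
the bump at `center` divided by the sum of the bumps centred at the points of `nbhd`. -/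
structure LocalChart (E : Type*) [NormedAddCommGroup E] (K : ℝ) where
  scale : ℝ
  center : E
  nbhd : Finset E
  card_nbhd_le : (nbhd.card : ℝ) ≤ K
  japaneseBracket_center_le : ∀ ω ∈ nbhd, japaneseBracket center ≤ 3 * japaneseBracket ω

namespace LocalChart

variable (p : LocalChart E K)

noncomputable def denom (η : E) : ℝ :=
  ∑ ω ∈ p.nbhd, localBump p.scale ω (p.center + (p.scale * japaneseBracket p.center) • η)

noncomputable def weight (η : E) : ℝ := bump η * cutoffInv (p.denom η)

lemma contDiff_denom : ContDiff ℝ (⊤ : ℕ∞) p.denom := by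
  unfold denom
  simp only [localBump_add_smul]
  exact ContDiff.sum fun ω _ =>
    contDiff_bump.comp (contDiff_const.add (contDiff_id.const_smul _))

lemma denom_mem_Icc (η : E) : p.denom η ∈ Icc 0 K := by
  refine ⟨Finset.sum_nonneg fun ω _ => bump_nonneg _, ?_⟩
  calc p.denom η ≤ ∑ _ω ∈ p.nbhd, (1 : ℝ) := Finset.sum_le_sum fun ω _ => bump_le_one _
    _ = p.nbhd.card := by simp
    _ ≤ K := p.card_nbhd_le

/-- In the variable `η`, the bump centred at `ω` is `bump` composed with an affine map of slope
`⟨center⟩ / ⟨ω⟩ ≤ 3`. -/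
lemma norm_iteratedFDeriv_denom_le (n : ℕ) {C : ℝ}
    (hC : ∀ y, ‖iteratedFDeriv ℝ n (bump : E → ℝ) y‖ ≤ C) (x : E) :
    ‖iteratedFDeriv ℝ n p.denom x‖ ≤ K * (3 ^ n * C) := by
  have hC0 : 0 ≤ C := (norm_nonneg _).trans (hC 0)
  have hterm : ∀ ω ∈ p.nbhd, ‖iteratedFDeriv ℝ n (fun η => localBump p.scale ω
      (p.center + (p.scale * japaneseBracket p.center) • η)) x‖ ≤ 3 ^ n * C := by
    intro ω hω
    simp only [localBump_add_smul]
    rw [norm_iteratedFDeriv_comp_add_smul contDiff_bump]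
    gcongr
    · exact abs_inv_mul_mul_le_of_le_mul (japaneseBracket_pos ω) (japaneseBracket_pos _).le
        (p.japaneseBracket_center_le ω hω)
    · exact hC _
  rw [show p.denom = fun η => ∑ ω ∈ p.nbhd, localBump p.scale ω
      (p.center + (p.scale * japaneseBracket p.center) • η) from rfl,
    iteratedFDeriv_sum fun ω _ => ?_]
  · calc _ ≤ ∑ ω ∈ p.nbhd, ‖iteratedFDeriv ℝ n (fun η => localBump p.scale ω
          (p.center + (p.scale * japaneseBracket p.center) • η)) x‖ := by
          rw [Finset.sum_apply]; exact norm_sum_le _ _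
      _ ≤ ∑ _ω ∈ p.nbhd, 3 ^ n * C := Finset.sum_le_sum hterm
      _ ≤ K * (3 ^ n * C) := by
          rw [Finset.sum_const, nsmul_eq_mul]
          gcongr
          exact p.card_nbhd_le
  · simp only [localBump_add_smul]
    exact (contDiff_bump.comp (contDiff_const.add (contDiff_id.const_smul _))).of_le
      (by exact_mod_cast le_top)

end LocalChart

lemma hasUniformDerivBounds_denom :
    HasUniformDerivBounds fun p : LocalChart E K => p.denom := by
  intro n
  obtain ⟨C, hC⟩ := hasUniformDerivBounds_bump (E := E) (ι := Unit) n
  exact ⟨K * (3 ^ n * C), fun p x => p.norm_iteratedFDeriv_denom_le n (hC ()) x⟩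

lemma hasUniformDerivBounds_weight :
    HasUniformDerivBounds fun p : LocalChart E K => p.weight := by
  have hinv : HasUniformDerivBounds fun p : LocalChart E K => cutoffInv ∘ p.denom :=
    hasUniformDerivBounds_denom.comp contDiff_cutoffInv LocalChart.contDiff_denom isCompact_Icc
      LocalChart.denom_mem_Icc
  exact hasUniformDerivBounds_bump.mul hinv (fun _ => contDiff_bump)
    fun p => contDiff_cutoffInv.comp p.contDiff_denom

lemma LocalChart.contDiff_weight (p : LocalChart E K) : ContDiff ℝ (⊤ : ℕ∞) p.weight :=
  contDiff_bump.mul (contDiff_cutoffInv.comp p.contDiff_denom)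

lemma LocalChart.weight_eq_zero (p : LocalChart E K) {η : E} (hη : 3⁻¹ ≤ ‖η‖) :
    p.weight η = 0 := by
  rw [weight, bump_eq_zero hη, zero_mul]

end Chart

lemma hasSum_subtype_of_support_subset {α M : Type*} [AddCommMonoid M] [TopologicalSpace M]
    {s : Set α} {f : α → M} {T : Finset α} (hTs : ↑T ⊆ s) (hfT : ∀ x ∈ s, f x ≠ 0 → x ∈ T) :
    HasSum (fun x : s => f x) (∑ x ∈ T, f x) := by
  change HasSum (f ∘ (↑) : s → M) _
  rw [hasSum_subtype_iff_indicator]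
  convert hasSum_sum_of_ne_finset_zero (f := s.indicator f) (s := T)
    (L := SummationFilter.unconditional α) fun x hx => ?_ using 1
  · exact Finset.sum_congr rfl fun x hx => (indicator_of_mem (hTs hx) f).symm
  · by_cases hxs : x ∈ s
    · rw [indicator_of_mem hxs]
      exact not_not.1 fun h => hx (hfT x hxs h)
    · exact indicator_of_notMem hxs f

section Partition

variable {E : Type*} [NormedAddCommGroup E] [NormedSpace ℝ E] {t : ℝ} {Ω : Set E}

lemma norm_smul_sub_eq_dist_div (ht : 0 < t) (ω ξ : E) :
    ‖(t * japaneseBracket ω)⁻¹ • (ξ - ω)‖ = dist ξ ω / (t * japaneseBracket ω) := by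
  have := japaneseBracket_pos ω
  rw [norm_smul, Real.norm_of_nonneg (by positivity), dist_eq_norm, inv_mul_eq_div]

variable [FiniteDimensional ℝ E]

lemma localBump_eq_one (ht : 0 < t) {ω ξ : E} (h : dist ξ ω ≤ 4⁻¹ * t * japaneseBracket ω) :
    localBump t ω ξ = 1 := by
  have := japaneseBracket_pos ω
  refine bump_eq_one ?_
  rw [norm_smul_sub_eq_dist_div ht, div_le_iff₀ (by positivity)]
  linarith

lemma mem_patch_of_localBump_ne_zero (ht : 0 < t) {ω ξ : E} (h : localBump t ω ξ ≠ 0) :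
    ξ ∈ patch t ω := by
  have := japaneseBracket_pos ω
  have h := norm_lt_of_bump_ne_zero h
  rw [norm_smul_sub_eq_dist_div ht, div_lt_iff₀ (by positivity)] at h
  rw [patch, mem_closedBall]
  nlinarith

noncomputable def IsNet.chart (hΩ : IsNet t Ω) (ht0 : 0 < t) (ht1 : t ≤ 1) (ω : E) :
    LocalChart E (98 ^ Module.finrank ℝ E) where
  scale := t
  center := ω
  nbhd := (hΩ.finite_and_ncard_neighbors_le ht0 ht1 ω).1.toFinset
  card_nbhd_le := by
    rw [← ncard_eq_toFinset_card _ (hΩ.finite_and_ncard_neighbors_le ht0 ht1 ω).1]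
    exact (hΩ.finite_and_ncard_neighbors_le ht0 ht1 ω).2
  japaneseBracket_center_le ω' hω' := (japaneseBracket_le_and_dist_le_of_patch_inter ht0.le ht1
    (inter_comm _ _ ▸ ((Finite.mem_toFinset _).1 hω').2)).1

namespace IsNet

lemma mem_chart_nbhd (hΩ : IsNet t Ω) (ht0 : 0 < t) (ht1 : t ≤ 1) {ω ω' : E} :
    ω' ∈ (hΩ.chart ht0 ht1 ω).nbhd ↔ ω' ∈ neighbors t Ω ω :=
  Finite.mem_toFinset _

lemma hasSum_localBump_chart (hΩ : IsNet t Ω) (ht0 : 0 < t) (ht1 : t ≤ 1) {ω ξ : E}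
    (hξ : ξ ∈ patch t ω) :
    HasSum (fun ω' : Ω => localBump t ↑ω' ξ)
      (∑ ω' ∈ (hΩ.chart ht0 ht1 ω).nbhd, localBump t ω' ξ) :=
  hasSum_subtype_of_support_subset (fun _ hx => ((hΩ.mem_chart_nbhd ht0 ht1).1 hx).1)
    fun _ hω' hne => (hΩ.mem_chart_nbhd ht0 ht1).2
      ⟨hω', ξ, hξ, mem_patch_of_localBump_ne_zero ht0 hne⟩

lemma exists_hasSum_localBump (hΩ : IsNet t Ω) (ht0 : 0 < t) (ht1 : t ≤ 1) (ξ : E) :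
    ∃ S, 1 ≤ S ∧ HasSum (fun ω : Ω => localBump t ↑ω ξ) S := by
  obtain ⟨ω₀, hω₀, hξω₀⟩ := hΩ.exists_dist_le ξ
  have hpos := japaneseBracket_pos ω₀
  have hS := hΩ.hasSum_localBump_chart ht0 ht1 (ω := ω₀) (ξ := ξ)
    (mem_closedBall.2 (by nlinarith))
  refine ⟨_, ?_, hS⟩
  rw [← localBump_eq_one ht0 hξω₀]
  exact le_hasSum hS ⟨ω₀, hω₀⟩ fun _ _ => bump_nonneg _

lemma chart_weight_eq_div (hΩ : IsNet t Ω) (ht0 : 0 < t) (ht1 : t ≤ 1) {ξ : E} {S : ℝ}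
    (hS : HasSum (fun ω : Ω => localBump t ↑ω ξ) S) (hS1 : 1 ≤ S) (ω : E) :
    (hΩ.chart ht0 ht1 ω).weight ((t * japaneseBracket ω)⁻¹ • (ξ - ω)) = localBump t ω ξ / S := by
  have hpos := japaneseBracket_pos ω
  change localBump t ω ξ * cutoffInv (∑ ω' ∈ (hΩ.chart ht0 ht1 ω).nbhd,
    localBump t ω' (ω + (t * japaneseBracket ω) • (t * japaneseBracket ω)⁻¹ • (ξ - ω))) = _
  rw [smul_inv_smul₀ (by positivity), add_sub_cancel]
  by_cases h0 : localBump t ω ξ = 0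
  · rw [h0, zero_mul, zero_div]
  rw [(hΩ.hasSum_localBump_chart ht0 ht1 (mem_patch_of_localBump_ne_zero ht0 h0)).unique hS,
    cutoffInv_of_one_le hS1, div_eq_mul_inv]

lemma hasSum_chart_weight (hΩ : IsNet t Ω) (ht0 : 0 < t) (ht1 : t ≤ 1) (ξ : E) :
    HasSum (fun ω : Ω => (hΩ.chart ht0 ht1 ω).weight ((t * japaneseBracket ω.1)⁻¹ • (ξ - ω)))
      1 := by
  obtain ⟨S, hS1, hS⟩ := hΩ.exists_hasSum_localBump ht0 ht1 ξ
  simp_rw [hΩ.chart_weight_eq_div ht0 ht1 hS hS1]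
  simpa [div_self (by linarith : S ≠ 0)] using hS.div_const S

lemma chart_weight_mem_Icc (hΩ : IsNet t Ω) (ht0 : 0 < t) (ht1 : t ≤ 1) {ω : E} (hω : ω ∈ Ω)
    (η : E) :
    (hΩ.chart ht0 ht1 ω).weight η ∈ Icc 0 1 := by
  have hpos := japaneseBracket_pos ω
  obtain ⟨S, hS1, hS⟩ := hΩ.exists_hasSum_localBump ht0 ht1 (ω + (t * japaneseBracket ω) • η)
  have hη : η = (t * japaneseBracket ω)⁻¹ • (ω + (t * japaneseBracket ω) • η - ω) := by
    rw [add_sub_cancel_left, inv_smul_smul₀ (by positivity)]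
  rw [hη, hΩ.chart_weight_eq_div ht0 ht1 hS hS1]
  exact ⟨div_nonneg (bump_nonneg _) (by linarith),
    (div_le_one (by linarith)).2 (le_hasSum hS ⟨ω, hω⟩ fun _ _ => bump_nonneg _)⟩

end IsNet

end Partition

end BracketPartition

open BracketPartition in
theorem statement16 (δ : ℝ) (hδ : δ ∈ Set.Ioc (0 : ℝ) 1) (d : ℕ) :
    ∃ (C : ℝ) (M : ℕ) (Cj : ℕ → ℝ), 0 < C ∧ (∀ j, 0 ≤ Cj j) ∧
      ∀ hh : ℝ, hh ∈ Set.Ioc (0 : ℝ) 1 →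
        ∃ (Ω : Set (EuclideanSpace ℝ (Fin d)))
          (φ : EuclideanSpace ℝ (Fin d) → EuclideanSpace ℝ (Fin d) → ℝ),
          Ω.Countable ∧
          (∀ ξ : EuclideanSpace ℝ (Fin d), ∃ ω ∈ Ω, ξ ∈ Uball d hh δ ω) ∧
          (∀ X : ℝ, 1 ≤ X →
            {ω ∈ Ω | ‖ω‖ ≤ X}.Finite ∧
            ({ω ∈ Ω | ‖ω‖ ≤ X}.ncard : ℝ) ≤ C * hh ^ (-(M : ℤ)) * X ^ M) ∧
          (∀ ω₁ ∈ Ω,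
            {ω₂ ∈ Ω | (Uball d hh δ ω₁ ∩ Uball d hh δ ω₂).Nonempty}.Finite ∧
            ({ω₂ ∈ Ω | (Uball d hh δ ω₁ ∩ Uball d hh δ ω₂).Nonempty}.ncard : ℝ) ≤ C) ∧
          (∀ ω ∈ Ω,
            ContDiff ℝ (⊤ : ℕ∞) (φ ω) ∧
            (∀ ξ, φ ω ξ ∈ Set.Icc (0 : ℝ) 1) ∧
            (∀ ξ : EuclideanSpace ℝ (Fin d), 2⁻¹ < ‖ξ‖ → φ ω ξ = 0) ∧
            (∀ (j : ℕ) (ξ : EuclideanSpace ℝ (Fin d)),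
              ‖iteratedFDeriv ℝ j (φ ω) ξ‖ ≤ Cj j)) ∧
          (∀ ξ : EuclideanSpace ℝ (Fin d),
            HasSum
              (fun ω : Ω =>
                φ ω.1 ((hh ^ δ * Real.sqrt (1 + ‖ω.1‖ ^ 2))⁻¹ • (ξ - ω.1)))
              1) := by
  choose B hB using hasUniformDerivBounds_weight (E := EuclideanSpace ℝ (Fin d))
    (K := 98 ^ Module.finrank ℝ (EuclideanSpace ℝ (Fin d)))
  refine ⟨98 ^ Module.finrank ℝ (EuclideanSpace ℝ (Fin d)),
    Module.finrank ℝ (EuclideanSpace ℝ (Fin d)), fun j => max (B j) 0, by positivity,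
    fun j => le_max_right _ _, fun h ⟨h0, h1⟩ => ?_⟩
  have ht0 : 0 < h ^ δ := Real.rpow_pos_of_pos h0 δ
  have ht1 : h ^ δ ≤ 1 := Real.rpow_le_one h0.le h1 hδ.1.le
  have hht : h ≤ h ^ δ := by simpa using Real.rpow_le_rpow_of_exponent_ge h0 h1 hδ.2
  obtain ⟨Ω, hΩ⟩ := exists_isNet (E := EuclideanSpace ℝ (Fin d)) ht0.le ht1
  refine ⟨Ω, fun ω => (hΩ.chart ht0 ht1 ω).weight, hΩ.countable ht0 ht1, fun ξ => ?_,
    fun X hX => ?_, fun ω _ => hΩ.finite_and_ncard_neighbors_le ht0 ht1 ω,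
    fun ω hω => ⟨(hΩ.chart ht0 ht1 ω).contDiff_weight, hΩ.chart_weight_mem_Icc ht0 ht1 hω,
      fun ξ hξ => LocalChart.weight_eq_zero _ (by linarith),
      fun j ξ => (hB j _ ξ).trans (le_max_left _ _)⟩, hΩ.hasSum_chart_weight ht0 ht1⟩
  · obtain ⟨ω, hω, hξω⟩ := hΩ.exists_dist_le ξ
    have := japaneseBracket_pos ω
    exact ⟨ω, hω, show dist ξ ω ≤ 2⁻¹ * h ^ δ * japaneseBracket ω by nlinarith⟩
  · obtain ⟨hfin, hcard⟩ := hΩ.finite_and_ncard_norm_le ht0 ht1 hX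
    refine ⟨hfin, hcard.trans ?_⟩
    rw [zpow_neg, zpow_natCast, ← inv_pow, ← mul_pow, ← mul_pow, mul_right_comm,
      ← div_eq_mul_inv]
    have hX0 : 0 ≤ X := by linarith
    gcongr
    norm_num
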